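/- In the KL-UCB algorithm with exploration function log(t) + 3·log(log(t)) applied to a bandit problem with rewards in [0,1], the number of draws of a suboptimal arm a (with μ_a < μ₁, where arm 1 is optimal) satisfies the pathwise inequality: Σ_{t=1}^n 𝟙{A_t = a, μ₁ ≤ u₁(t)} ≤ Σ_{s=1}^n 𝟙{ s·d⁺(μ̂_{a,s}, μ₁) ≤ log(n) + 3·log(log(n)) }, where μ̂_{a,s} is the empirical mean of the first s rewards of arm a, u₁(t) is the KL-UCB index of arm 1 at time t, and d⁺(x,y) = d(x,y)·𝟙{x < y}. -/

import Mathlib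

/-!
If the suboptimal arm `a` is played at time `t` while `μ₁ ≤ u₁(t)`, then `μ₁ ≤ u₁(t) ≤ u_a(t)`.
Since `q ↦ d(p, q)` is nondecreasing and left-continuous on `[p, 1]`, the set defining the index
is closed on the right, so `μ₁ ≤ u_a(t)` yields
`N_a(t) d⁺(μ̂_{a, N_a(t)}, μ₁) ≤ log t + 3 log log t ≤ log n + 3 log log n`.
Finally `t ↦ N_a(t)` is strictly increasing on the times at which `a` is played, so it injects
the counted times `t ≤ n` into the counted sample sizes `s ≤ n`.
-/

open scoped ENNReal Classical

/-- Bernoulli KL divergence with the conventions giving `+∞` at the boundary. -/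
noncomputable def dBern (p q : ℝ) : ℝ≥0∞ :=
  if (0 < p ∧ q ≤ 0) ∨ (p < 1 ∧ 1 ≤ q) then ⊤
  else ENNReal.ofReal (p * Real.log (p / q) + (1 - p) * Real.log ((1 - p) / (1 - q)))

/-- `d⁺(x,y) = d(x,y) 𝟙{x < y}`. -/
noncomputable def dBernPlus (p q : ℝ) : ℝ≥0∞ := if p < q then dBern p q else 0

open Filter Topology Real Set

noncomputable def klBernReal (p x : ℝ) : ℝ :=
  p * (log p - log x) + (1 - p) * (log (1 - p) - log (1 - x))

lemma dBern_self (p : ℝ) : dBern p p = 0 := by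
  rw [dBern, if_neg (by rintro (⟨h1, h2⟩ | ⟨h1, h2⟩) <;> linarith)]
  rcases eq_or_ne p 0 with rfl | hp0
  · simp
  rcases eq_or_ne p 1 with rfl | hp1
  · simp
  rw [div_self hp0, div_self (sub_ne_zero.2 hp1.symm)]
  simp

lemma dBern_one {p : ℝ} (hp : p < 1) : dBern p 1 = ⊤ :=
  if_pos (Or.inr ⟨hp, le_rfl⟩)

lemma dBern_eq_ofReal {p x : ℝ} (hp0 : 0 ≤ p) (hp1 : p ≤ 1) (hx0 : 0 < x) (hx1 : x < 1) :
    dBern p x = ENNReal.ofReal (klBernReal p x) := by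
  rw [dBern, if_neg (by rintro (⟨h1, h2⟩ | ⟨h1, h2⟩) <;> linarith), klBernReal]
  congr 1
  have hlog₁ : p * log (p / x) = p * (log p - log x) := by
    rcases eq_or_ne p 0 with rfl | hp
    · simp
    · rw [log_div hp hx0.ne']
  have hlog₂ : (1 - p) * log ((1 - p) / (1 - x)) = (1 - p) * (log (1 - p) - log (1 - x)) := by
    rcases eq_or_ne p 1 with rfl | hp
    · simp
    · rw [log_div (sub_ne_zero.2 hp.symm) (by linarith)]
  rw [hlog₁, hlog₂]

lemma klBernReal_le_klBernReal {p q x : ℝ} (hp : p ≤ q) (hq : 0 < q) (hqx : q ≤ x)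
    (hx : x < 1) : klBernReal p q ≤ klBernReal p x := by
  have hx0 : 0 < x := hq.trans_le hqx
  have hup : q * (log x - log q) ≤ x - q := by
    have := log_le_sub_one_of_pos (div_pos hx0 hq)
    rw [log_div hx0.ne' hq.ne'] at this
    have h : q * (x / q - 1) = x - q := by field_simp
    nlinarith
  have hlow : x - q ≤ (1 - q) * (log (1 - q) - log (1 - x)) := by
    have := log_le_sub_one_of_pos (show 0 < (1 - x) / (1 - q) by apply div_pos <;> linarith)
    rw [log_div (by linarith) (by linarith)] at this
    have h : (1 - q) * ((1 - x) / (1 - q) - 1) = q - x := by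
      field_simp [show 1 - q ≠ 0 by linarith]
      ring
    nlinarith
  have hlog : 0 ≤ log x - log q := sub_nonneg.2 (log_le_log hq hqx)
  have hlog' : 0 ≤ log (1 - q) - log (1 - x) :=
    sub_nonneg.2 (log_le_log (by linarith) (by linarith))
  have hleft : p * (log x - log q) ≤ q * (log x - log q) := mul_le_mul_of_nonneg_right hp hlog
  have hright : (1 - q) * (log (1 - q) - log (1 - x)) ≤ (1 - p) * (log (1 - q) - log (1 - x)) :=
    mul_le_mul_of_nonneg_right (by linarith) hlog'
  unfold klBernReal
  linarith

lemma dBern_le_dBern {p q x : ℝ} (hp : 0 ≤ p) (hpq : p < q) (hqx : q ≤ x) (hx : x ≤ 1) :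
    dBern p q ≤ dBern p x := by
  rcases hx.lt_or_eq with hx | rfl
  · have hq : 0 < q := hp.trans_lt hpq
    rw [dBern_eq_ofReal hp (by linarith) hq (by linarith), dBern_eq_ofReal hp (by linarith)
      (by linarith) hx]
    exact ENNReal.ofReal_le_ofReal (klBernReal_le_klBernReal hpq.le hq hqx hx)
  · rw [dBern_one (by linarith)]
    exact le_top

lemma tendsto_klBernReal_nhdsLT_one {p : ℝ} (hp : p < 1) :
    Tendsto (klBernReal p) (𝓝[<] 1) atTop := by
  have h1x : Tendsto (fun x : ℝ => 1 - x) (𝓝[<] 1) (𝓝[>] 0) := by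
    refine tendsto_nhdsWithin_of_tendsto_nhds_of_eventually_within _ ?_ ?_
    · have h : Tendsto (fun x : ℝ => 1 - x) (𝓝[<] 1) (𝓝 (1 - 1)) :=
        ((continuous_const.sub continuous_id).tendsto 1).mono_left nhdsWithin_le_nhds
      simpa using h
    · filter_upwards [self_mem_nhdsWithin] with x hx
      simpa using hx
  have hlog : Tendsto (fun x => -log (1 - x)) (𝓝[<] 1) atTop :=
    tendsto_neg_atBot_atTop.comp (tendsto_log_nhdsGT_zero.comp h1x)
  have hcont : Tendsto (fun x => p * (log p - log x) + (1 - p) * log (1 - p)) (𝓝[<] 1)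
      (𝓝 (p * (log p - log 1) + (1 - p) * log (1 - p))) :=
    ((continuousAt_const.mul (continuousAt_const.sub
      (continuousAt_log one_ne_zero))).add continuousAt_const).tendsto.mono_left
      nhdsWithin_le_nhds
  refine (hcont.add_atTop (hlog.const_mul_atTop (sub_pos.2 hp))).congr fun x => ?_
  rw [klBernReal]
  ring

lemma tendsto_dBern_nhdsLT {p y : ℝ} (hp : 0 ≤ p) (hpy : p < y) (hy : y ≤ 1) :
    Tendsto (dBern p) (𝓝[<] y) (𝓝 (dBern p y)) := by
  have hlim : Tendsto (fun x => ENNReal.ofReal (klBernReal p x)) (𝓝[<] y) (𝓝 (dBern p y)) := by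
    rcases hy.lt_or_eq with hy | rfl
    · rw [dBern_eq_ofReal hp (by linarith) (by linarith) hy]
      refine (ENNReal.continuous_ofReal.tendsto _).comp (ContinuousAt.tendsto ?_ |>.mono_left
        nhdsWithin_le_nhds)
      have hy0 : y ≠ 0 := by linarith
      have hy1 : 1 - y ≠ 0 := by linarith
      unfold klBernReal
      fun_prop (disch := assumption)
    · rw [dBern_one hpy]
      exact ENNReal.tendsto_ofReal_atTop.comp (tendsto_klBernReal_nhdsLT_one hpy)
  refine hlim.congr' ?_
  filter_upwards [Ioo_mem_nhdsLT hpy] with x hx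
  exact (dBern_eq_ofReal hp (by linarith) (by linarith [hx.1]) (by linarith [hx.2])).symm

lemma dBernPlus_le_of_le_sSup {m L : ℝ≥0∞} {p y : ℝ} (hm : m ≠ ⊤) (hp : p ∈ Icc (0 : ℝ) 1)
    (hy : y ≤ sSup {q : ℝ | q ∈ Icc p 1 ∧ m * dBern p q ≤ L}) : m * dBernPlus p y ≤ L := by
  set S := {q : ℝ | q ∈ Icc p 1 ∧ m * dBern p q ≤ L}
  by_cases hpy : p < y
  swap
  · simp [dBernPlus, hpy]
  rw [dBernPlus, if_pos hpy]
  have hS : S.Nonempty := ⟨p, ⟨le_rfl, hp.2⟩, by simp [dBern_self]⟩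
  have hy1 : y ≤ 1 := hy.trans (csSup_le hS fun q hq => hq.1.2)
  have hbelow : ∀ᶠ q in 𝓝[<] y, m * dBern p q ≤ L := by
    filter_upwards [Ioo_mem_nhdsLT hpy] with q hq
    obtain ⟨x, hxS, hqx⟩ := exists_lt_of_lt_csSup hS (hq.2.trans_le hy)
    calc m * dBern p q ≤ m * dBern p x := by
          gcongr
          exact dBern_le_dBern hp.1 hq.1 hqx.le hxS.1.2
      _ ≤ L := hxS.2
  exact le_of_tendsto (ENNReal.Tendsto.const_mul (tendsto_dBern_nhdsLT hp.1 hpy hy1) (.inr hm))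
    hbelow

lemma Finset.sum_div_card_mem_Icc {ι : Type*} {s : Finset ι} {f : ι → ℝ}
    (hf : ∀ i ∈ s, f i ∈ Set.Icc (0 : ℝ) 1) : (∑ i ∈ s, f i) / s.card ∈ Set.Icc (0 : ℝ) 1 :=
  ⟨div_nonneg (Finset.sum_nonneg fun i hi => (hf i hi).1) s.card.cast_nonneg,
    div_le_one_of_le₀ (by simpa using Finset.sum_le_card_nsmul s f 1 fun i hi => (hf i hi).2)
      s.card.cast_nonneg⟩

lemma card_filter_Icc_le (P : ℕ → Prop) [DecidablePred P] (t : ℕ) :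
    ((Finset.Icc 1 t).filter P).card ≤ t :=
  (Finset.card_filter_le _ _).trans (by simp)

lemma card_filter_Icc_lt_card_filter_Icc {P : ℕ → Prop} [DecidablePred P] {s t : ℕ}
    (hst : s < t) (ht : P t) :
    ((Finset.Icc 1 s).filter P).card < ((Finset.Icc 1 t).filter P).card := by
  refine Finset.card_lt_card ((Finset.ssubset_iff_of_subset
    (Finset.filter_subset_filter _ (Finset.Icc_subset_Icc_right hst.le))).2 ⟨t, ?_, ?_⟩)
  · exact Finset.mem_filter.2 ⟨Finset.mem_Icc.2 ⟨by omega, le_rfl⟩, ht⟩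
  · exact fun h => (Finset.mem_Icc.1 (Finset.mem_filter.1 h).1).2.not_gt hst

lemma monotone_ofReal_log_add_three_mul_log_log :
    Monotone fun t : ℕ => ENNReal.ofReal (log t + 3 * log (log t)) := by
  intro t n htn
  rcases le_or_gt t 1 with ht | ht
  · interval_cases t <;> simp
  have hlog : 0 < log t := log_pos (by exact_mod_cast ht)
  apply ENNReal.ofReal_le_ofReal
  gcongr

theorem klucb_pathwise_counting_general
    (K : ℕ) (hK : 1 ≤ K) (a : ℕ)
    (X : ℕ → ℕ → ℝ) (hX : ∀ b s, X b s ∈ Set.Icc (0 : ℝ) 1)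
    (μ1 : ℝ)
    (A : ℕ → ℕ)
    (N : ℕ → ℕ → ℕ)
    (hN : ∀ b t, N b t = ((Finset.Icc 1 t).filter fun s => A s = b).card)
    (μhat : ℕ → ℕ → ℝ)
    (hμhat : ∀ b s, μhat b s = (∑ i ∈ Finset.Icc 1 s, X b i) / s)
    (u : ℕ → ℕ → ℝ)
    (hu : ∀ b t, u b t = sSup {q : ℝ | q ∈ Set.Icc (μhat b (N b t)) 1 ∧
      (N b t : ℝ≥0∞) * dBern (μhat b (N b t)) q ≤
        ENNReal.ofReal (Real.log t + 3 * Real.log (Real.log t))})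
    (hA : ∀ t, A t ∈ Finset.Icc 1 K ∧ ∀ b ∈ Finset.Icc 1 K, u b t ≤ u (A t) t)
    (n : ℕ) :
    (∑ t ∈ Finset.Icc 1 n, if A t = a ∧ μ1 ≤ u 1 t then 1 else 0) ≤
      ∑ s ∈ Finset.Icc 1 n,
        if (s : ℝ≥0∞) * dBernPlus (μhat a s) μ1 ≤
            ENNReal.ofReal (Real.log n + 3 * Real.log (Real.log n)) then 1 else 0 := by
  have hμhat_mem : ∀ s, μhat a s ∈ Set.Icc (0 : ℝ) 1 := fun s => by
    simpa [hμhat] using Finset.sum_div_card_mem_Icc (s := Finset.Icc 1 s) fun i _ => hX a i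
  rw [← Finset.card_filter, ← Finset.card_filter]
  refine Finset.card_le_card_of_injOn (N a) ?_ ?_
  · intro t ht
    simp only [Finset.coe_filter, Finset.mem_Icc, Set.mem_ofPred_eq] at ht ⊢
    obtain ⟨⟨ht1, htn⟩, hAt, hμu⟩ := ht
    have hpos : 0 < N a t := by
      simpa [hN] using card_filter_Icc_lt_card_filter_Icc (P := fun s => A s = a) ht1 hAt
    have hindex : μ1 ≤ u a t := hμu.trans (hAt ▸ (hA t).2 1 (Finset.mem_Icc.2 ⟨le_rfl, hK⟩))
    rw [hu] at hindex
    refine ⟨⟨hpos, (hN a t ▸ card_filter_Icc_le _ t).trans htn⟩, ?_⟩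
    exact (dBernPlus_le_of_le_sSup (ENNReal.natCast_ne_top _) (hμhat_mem _) hindex).trans
      (monotone_ofReal_log_add_three_mul_log_log htn)
  · refine StrictMonoOn.injOn fun s _ t ht hst => ?_
    simp only [Finset.coe_filter, Set.mem_ofPred_eq] at ht
    rw [hN, hN]
    exact card_filter_Icc_lt_card_filter_Icc hst ht.2.1

/-- Pathwise counting lemma (Lemma 2) for KL-UCB with exploration function
`log t + 3 log log t`: the number of times `t ≤ n` at which the suboptimal arm `a` is
played while `μ₁ ≤ u₁(t)` is at most the number of `s ≤ n` with
`s d⁺(μ̂_{a,s}, μ₁) ≤ log n + 3 log log n`. -/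
theorem klucb_pathwise_counting
    (K : ℕ) (hK : 1 ≤ K) (a : ℕ) (haK : a ∈ Finset.Icc 1 K) (ha1 : a ≠ 1)
    (X : ℕ → ℕ → ℝ) (hX : ∀ b s, X b s ∈ Set.Icc (0 : ℝ) 1)
    (μ1 : ℝ) (hμ1 : μ1 ∈ Set.Icc (0 : ℝ) 1)
    (A : ℕ → ℕ)
    (N : ℕ → ℕ → ℕ)
    (hN : ∀ b t, N b t = ((Finset.Icc 1 t).filter fun s => A s = b).card)
    (μhat : ℕ → ℕ → ℝ)
    (hμhat : ∀ b s, μhat b s = (∑ i ∈ Finset.Icc 1 s, X b i) / s)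
    (u : ℕ → ℕ → ℝ)
    (hu : ∀ b t, u b t = sSup {q : ℝ | q ∈ Set.Icc (μhat b (N b t)) 1 ∧
      (N b t : ℝ≥0∞) * dBern (μhat b (N b t)) q ≤
        ENNReal.ofReal (Real.log t + 3 * Real.log (Real.log t))})
    (hA : ∀ t, A t ∈ Finset.Icc 1 K ∧ ∀ b ∈ Finset.Icc 1 K, u b t ≤ u (A t) t)
    (n : ℕ) :
    (∑ t ∈ Finset.Icc 1 n, if A t = a ∧ μ1 ≤ u 1 t then 1 else 0) ≤
      ∑ s ∈ Finset.Icc 1 n,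
        if (s : ℝ≥0∞) * dBernPlus (μhat a s) μ1 ≤
            ENNReal.ofReal (Real.log n + 3 * Real.log (Real.log n)) then 1 else 0 :=
  klucb_pathwise_counting_general K hK a X hX μ1 A N hN μhat hμhat u hu hA n
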